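/- arXiv:1510.03611 — 4 statements merged into one kernel-verified Lean document; each statement's English description precedes it below -/
import Mathlib

section
/- Let g ∈ GL(n, ℂ) with all leading principal minors nonzero, and let g = bZ be its Gauss decomposition with b lower triangular and Z upper unitriangular. Then for i < j, the entry z_{ij} of Z equals z_{ij} = det([g with rows 1,...,i and columns 1,...,i-1,j]) / det([g]_{ii}), i.e. the minor of g on rows 1,…,i and columns 1,…,i−1,j divided by the leading principal i×i minor. -/
/-- The leading principal `k × k` corner determinant of an `N × N` matrix
(for `k ≤ N`; we use `min k N` to keep the definition total). -/
noncomputable def cornerDet {N : ℕ} (M : Matrix (Fin N) (Fin N) ℂ) (k : ℕ) : ℂ :=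
  (M.submatrix (Fin.castLE (min_le_right k N)) (Fin.castLE (min_le_right k N))).det

/-- in the Gauss decomposition `g = b Z` of a matrix with nonzero
leading principal minors, the entry `z_{ij}` (for `i < j`) of the unipotent
factor `Z` equals the minor of `g` on rows `1, …, i` and columns `1, …, i-1, j`
divided by the leading principal `i × i` minor. Here the 0-based `i j : Fin n`
correspond to 1-based indices `i+1`, `j+1`, so the numerator is the minor on the
first `i+1` rows and on columns `1, …, i` together with column `j`, and the
denominator is the leading `(i+1) × (i+1)` minor. -/
theorem gauss_unipotent_entries (n : ℕ) (g b Z : Matrix (Fin n) (Fin n) ℂ)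
    (hb : ∀ i j : Fin n, i < j → b i j = 0) (hbu : IsUnit b.det)
    (hZ1 : ∀ i : Fin n, Z i i = 1) (hZ0 : ∀ i j : Fin n, j < i → Z i j = 0)
    (hg : g = b * Z)
    (hminors : ∀ j : ℕ, 1 ≤ j → j ≤ n → cornerDet g j ≠ 0) :
    ∀ i j : Fin n, i < j →
      Z i j =
        (Matrix.det (Matrix.of (fun a c : Fin ((i : ℕ) + 1) =>
            g (Fin.castLE i.isLt a)
              (if h : (c : ℕ) < (i : ℕ) then ⟨(c : ℕ), lt_trans h i.isLt⟩ else j)))) /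
          cornerDet g ((i : ℕ) + 1) := by
  intro i j hij
  have hm : (i : ℕ) + 1 ≤ n := i.isLt
  set m : ℕ := (i : ℕ) + 1 with hmdef
  set r : Fin m → Fin n := Fin.castLE hm with hr
  set col : Fin m → Fin n :=
    fun c => if h : (c : ℕ) < (i : ℕ) then ⟨(c : ℕ), lt_trans h i.isLt⟩ else j with hcol
  set B : Matrix (Fin m) (Fin m) ℂ := Matrix.of (fun a k => b (r a) (r k)) with hB
  -- sum restriction lemma
  have hsum : ∀ F : Fin n → ℂ, (∀ k : Fin n, m ≤ (k : ℕ) → F k = 0) →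
      ∑ k, F k = ∑ k : Fin m, F (r k) := by
    intro F hF
    rw [← Finset.sum_subset (Finset.subset_univ
      ((Finset.univ : Finset (Fin m)).map ⟨r, Fin.castLE_injective hm⟩))]
    · rw [Finset.sum_map]; rfl
    · intro k _ hk
      apply hF
      by_contra h
      push_neg at h
      exact hk (Finset.mem_map.mpr ⟨⟨(k : ℕ), h⟩, Finset.mem_univ _, rfl⟩)
  -- factored form of the g-submatrices
  have hBZ : ∀ cmap : Fin m → Fin n,
      (Matrix.of fun a c => g (r a) (cmap c) : Matrix (Fin m) (Fin m) ℂ)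
        = B * Matrix.of (fun k c => Z (r k) (cmap c)) := by
    intro cmap
    ext a c
    simp only [Matrix.of_apply, Matrix.mul_apply, hg]
    rw [hsum (fun k => b (r a) k * Z k (cmap c)) (by
      intro k hk
      have hra : r a < k := by
        have ha : (a : ℕ) < m := a.isLt
        exact Fin.lt_def.mpr (by simp only [hr, Fin.coe_castLE]; omega)
      show b (r a) k * Z k (cmap c) = 0
      rw [hb _ _ hra, zero_mul])]
    rfl
  -- determinant of the Z-part with columns `col`
  have hWdet : (Matrix.of (fun k c => Z (r k) (col c)) : Matrix (Fin m) (Fin m) ℂ).det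
      = Z i j := by
    rw [Matrix.det_of_upperTriangular]
    · rw [Finset.prod_eq_single (Fin.last (i : ℕ))]
      · have h1 : r (Fin.last (i : ℕ)) = i := by
          apply Fin.ext; simp [hr]
        have h2 : col (Fin.last (i : ℕ)) = j := by
          simp [hcol, Fin.last]
        simp [h1, h2]
      · intro k _ hk
        have hki : (k : ℕ) < (i : ℕ) := by
          have := k.isLt
          have : (k : ℕ) ≠ (i : ℕ) := fun h => hk (Fin.ext (by simp [Fin.last, h]))
          omega
        have h1 : col k = ⟨(k : ℕ), lt_trans hki i.isLt⟩ := by simp [hcol, hki]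
        have h3 : col k = r k := by apply Fin.ext; simp [h1, hr]
        simp only [Matrix.of_apply, h3]
        exact hZ1 _
      · intro h; exact absurd (Finset.mem_univ _) h
    · intro a c hca
      have hca' : (c : ℕ) < (a : ℕ) := hca
      have hci : (c : ℕ) < (i : ℕ) := by have := a.isLt; omega
      have h1 : col c = ⟨(c : ℕ), lt_trans hci i.isLt⟩ := by simp [hcol, hci]
      simp only [Matrix.of_apply, h1]
      apply hZ0
      exact Fin.lt_def.mpr (by simpa [hr] using hca')
  -- determinant of the leading Z-part
  have hW'det : (Matrix.of (fun k c => Z (r k) (r c)) : Matrix (Fin m) (Fin m) ℂ).det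
      = 1 := by
    rw [Matrix.det_of_upperTriangular]
    · apply Finset.prod_eq_one
      intro k _
      exact hZ1 _
    · intro a c hca
      exact hZ0 _ _ (Fin.lt_def.mpr (by simpa [hr] using hca))
  -- corner determinant
  have hmin : min m n = m := min_eq_left hm
  have hcorner : cornerDet g m = (Matrix.of fun a c : Fin m => g (r a) (r c)).det := by
    unfold cornerDet
    have : (g.submatrix (Fin.castLE (min_le_right m n)) (Fin.castLE (min_le_right m n)))
        = (Matrix.of fun a c : Fin m => g (r a) (r c)).submatrix
            (finCongr hmin) (finCongr hmin) := rfl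
    rw [this, Matrix.det_submatrix_equiv_self]
  have hnum : (Matrix.of (fun a c : Fin m => g (r a) (col c))).det = B.det * Z i j := by
    rw [hBZ col, Matrix.det_mul, hWdet]
  have hden : cornerDet g m = B.det := by
    rw [hcorner, hBZ r, Matrix.det_mul, hW'det, mul_one]
  have hB0 : B.det ≠ 0 := by
    rw [← hden]; exact hminors m (by omega) hm
  have goalmat : (Matrix.of (fun a c : Fin m =>
      g (Fin.castLE i.isLt a)
        (if h : (c : ℕ) < (i : ℕ) then ⟨(c : ℕ), lt_trans h i.isLt⟩ else j)))
      = Matrix.of (fun a c : Fin m => g (r a) (col c)) := rfl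
  rw [goalmat, hnum, hden, mul_comm, mul_div_assoc, div_self hB0, mul_one]
end

section
/- Let Z ∈ GL(n, ℂ) be upper unitriangular, and let g, h ∈ GL(n, ℂ). Fix j with 1 ≤ j ≤ n−1. Write matrices in block form with blocks of sizes j and n−j. Suppose Zg admits a Gauss decomposition Zg = C^{-1}U with C lower triangular and U upper unitriangular, and denote Z^{[g]} := U. Then det([Z^{[g]} h]_{jj}) = det([Zgh]_{jj}) / det([Zg]_{jj}), where [X]_{jj} is the leading principal j×j corner. In other words, the function c_j(Z, g) := det([Zg]_{jj}) satisfies the cocycle (chain) identity c_j(Z, gh) = c_j(Z, g) · c_j(Z^{[g]}, h). -/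
open Matrix Finset


/-- Corner submatrix of a product with lower-triangular left factor. -/
lemma corner_mul_lower {n m : ℕ} (hle : m ≤ n) (L M : Matrix (Fin n) (Fin n) ℂ)
    (hL : ∀ i j : Fin n, i < j → L i j = 0) :
    (L * M).submatrix (Fin.castLE hle) (Fin.castLE hle)
      = L.submatrix (Fin.castLE hle) (Fin.castLE hle)
        * M.submatrix (Fin.castLE hle) (Fin.castLE hle) := by
  ext i k
  simp only [Matrix.mul_apply, Matrix.submatrix_apply]
  rw [← Finset.sum_filter_add_sum_filter_not Finset.univ (fun x : Fin n => (x : ℕ) < m)]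
  have h2 : ∑ x ∈ Finset.univ.filter (fun x : Fin n => ¬ (x : ℕ) < m),
      L (Fin.castLE hle i) x * M x (Fin.castLE hle k) = 0 := by
    apply Finset.sum_eq_zero
    intro x hx
    simp only [Finset.mem_filter, not_lt] at hx
    have : Fin.castLE hle i < x := by
      rw [Fin.lt_def]
      exact lt_of_lt_of_le i.isLt hx.2
    rw [hL _ _ this, zero_mul]
  rw [h2, add_zero]
  rcases Nat.eq_zero_or_pos m with hm | hm
  · subst hm; simp
  symm
  refine Finset.sum_nbij' (fun x : Fin m => Fin.castLE hle x)
    (fun x : Fin n => (⟨(x : ℕ) % m, Nat.mod_lt _ hm⟩ : Fin m)) ?_ ?_ ?_ ?_ ?_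
  · intro a _
    simp only [Finset.mem_filter, Finset.mem_univ, true_and]
    exact a.isLt
  · intro a _; exact Finset.mem_univ _
  · intro a _
    ext; simp [Nat.mod_eq_of_lt a.isLt]
  · intro a ha
    simp only [Finset.mem_filter] at ha
    ext; simp [Nat.mod_eq_of_lt ha.2]
  · intro a _; rfl

lemma cornerDet_mul_lower {n : ℕ} (L M : Matrix (Fin n) (Fin n) ℂ)
    (hL : ∀ i j : Fin n, i < j → L i j = 0) (j : ℕ) :
    cornerDet (L * M) j = cornerDet L j * cornerDet M j := by
  unfold cornerDet
  rw [corner_mul_lower _ _ _ hL, Matrix.det_mul]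


/-- the cocycle (chain) identity for leading corner determinants.
If `Z` is upper unitriangular and `Zg = C⁻¹ U` is a Gauss decomposition with `C`
lower triangular invertible and `U = Z^{[g]}` upper unitriangular, then for each
`1 ≤ j ≤ n - 1`,
`det ([Z^{[g]} h]_{jj}) = det ([Zgh]_{jj}) / det ([Zg]_{jj})`,
i.e. `c_j(Z, gh) = c_j(Z, g) · c_j(Z^{[g]}, h)` for `c_j(Z, g) = det ([Zg]_{jj})`. -/
theorem corner_det_cocycle (n : ℕ) (Z g h C U : Matrix (Fin n) (Fin n) ℂ)
    (hZ1 : ∀ i : Fin n, Z i i = 1) (hZ0 : ∀ i j : Fin n, j < i → Z i j = 0)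
    (hC : ∀ i j : Fin n, i < j → C i j = 0) (hCu : IsUnit C.det)
    (hU1 : ∀ i : Fin n, U i i = 1) (hU0 : ∀ i j : Fin n, j < i → U i j = 0)
    (hdec : Z * g = C⁻¹ * U)
    (j : ℕ) (hj1 : 1 ≤ j) (hjn : j ≤ n - 1) :
    cornerDet (U * h) j = cornerDet (Z * g * h) j / cornerDet (Z * g) j := by
  haveI : Invertible C := C.invertibleOfIsUnitDet hCu
  have hCt : C.BlockTriangular OrderDual.toDual := fun i k hik => hC i k hik
  have hCinv : C⁻¹.BlockTriangular OrderDual.toDual :=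
    Matrix.blockTriangular_inv_of_blockTriangular hCt
  have hCinv' : ∀ i k : Fin n, i < k → C⁻¹ i k = 0 := fun i k hik => hCinv hik
  -- corner det of U is 1
  have hUcorner : cornerDet U j = 1 := by
    unfold cornerDet
    rw [Matrix.det_of_upperTriangular]
    · simp [Matrix.submatrix_apply, hU1]
    · intro a b hab
      exact hU0 _ _ (by exact hab)
  -- cornerDet of C⁻¹ : product of diagonal entries, nonzero
  have hdetCinv : C⁻¹.det ≠ 0 := (Matrix.isUnit_nonsing_inv_det C hCu).ne_zero
  have h1 : cornerDet (Z * g * h) j = cornerDet C⁻¹ j * cornerDet (U * h) j := by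
    rw [show Z * g * h = C⁻¹ * (U * h) by rw [hdec, Matrix.mul_assoc]]
    exact cornerDet_mul_lower _ _ hCinv' j
  have h2 : cornerDet (Z * g) j = cornerDet C⁻¹ j := by
    rw [hdec, cornerDet_mul_lower _ _ hCinv' j, hUcorner, mul_one]
  have hdiag : ∀ i : Fin n, C⁻¹ i i ≠ 0 := by
    intro i hi
    apply hdetCinv
    rw [Matrix.det_of_lowerTriangular _ hCinv]
    exact Finset.prod_eq_zero (Finset.mem_univ i) hi
  have hcorner_ne : cornerDet C⁻¹ j ≠ 0 := by
    unfold cornerDet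
    rw [Matrix.det_of_lowerTriangular]
    · exact Finset.prod_ne_zero_iff.mpr (fun i _ => hdiag _)
    · intro a b hab
      refine hCinv' _ _ ?_
      rw [Fin.lt_def]
      exact hab
  rw [h1, h2, mul_comm, mul_div_assoc, div_self hcorner_ne, mul_one]
end

section
/- Define the Zhelobenko operator R_{km} (for 1 ≤ k < m ≤ n) acting on polynomials in the variables z_{ij} (1 ≤ i < j ≤ n) by R_{km} = ∂/∂z_{km} + ∑_{j > m} z_{mj} ∂/∂z_{kj}. For index sets I = {i_1 < i_2 < ... < i_s} and a determinant Φ formed from rows of an upper unitriangular variable matrix Z (rows indexed by I) together with fixed constant rows, the following hold: (a) R_{kl}Φ = 0 if k ∉ I; (b) R_{kl}Φ = 0 if both k ∈ I and l ∈ I; (c) if k ∈ I and l ∉ I, then R_{kl}Φ = ±Φ' where Φ' is the analogous determinant with row k of Z replaced by row l of Z, with sign (−1)^{t−s} where k = i_s and i_t < l < i_{t+1}. -/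
/-!
`R_{kl}` is a derivation, so it acts on a determinant row by row. It kills the constant rows and
every row `i ≠ k` of `Z`, and (as `k < l`) it maps row `k` of `Z` to row `l`. Hence `R_{kl} Φ` is
`Φ` with row `k` replaced by row `l`: zero if `k ∉ I`, zero if `l ∈ I` (two equal rows), and
otherwise `Φ'` up to the sign of the cycle moving row `l` from the position of `k` to its sorted
position.
-/

open MvPolynomial

/-- Polynomials in the entries `z_{ij}` (1-based indices) of a generic matrix. -/
abbrev Pz : Type := MvPolynomial (ℕ × ℕ) ℂ

/-- The variable `z_{ij}`. -/
noncomputable def zv (i j : ℕ) : Pz := X (i, j)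

/-- The `j`-th entry of the `i`-th row (1-based) of the generic upper
unitriangular matrix `Z`: `(0, …, 0, 1, z_{i(i+1)}, …)`. -/
noncomputable def Zrow (i j : ℕ) : Pz :=
  if i = j then 1 else if i < j then zv i j else 0

/-- The Zhelobenko operator `R_{kl} = ∂_{kl} + ∑_{j>l} z_{lj} ∂_{kj}` on
polynomials in the entries of the generic upper unitriangular `N × N` matrix. -/
noncomputable def Rz (N k l : ℕ) (p : Pz) : Pz :=
  pderiv (k, l) p + ∑ j ∈ Finset.Icc (l + 1) N, zv l j * pderiv (k, j) p

/-- The `N × N` matrix whose first `s` rows are the rows of the generic upper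
unitriangular matrix `Z` with (1-based) indices `e 0, …, e (s-1)`, and whose
remaining `t` rows are constant rows `c`. -/
noncomputable def ZconstMat (N s t : ℕ) (hst : s + t = N) (e : Fin s → ℕ)
    (c : Fin t → Fin N → ℂ) : Matrix (Fin N) (Fin N) Pz :=
  Matrix.of fun a b =>
    if h : (a : ℕ) < s then Zrow (e ⟨a, h⟩) ((b : ℕ) + 1)
    else MvPolynomial.C (c ⟨(a : ℕ) - s, by have := a.isLt; omega⟩ b)

namespace Derivation

variable {R A M : Type*} [CommSemiring R] [CommSemiring A] [AddCommMonoid M] [Algebra R A]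
  [Module A M] [Module R M]

theorem finset_sum_apply {ι : Type*} (s : Finset ι) (Ds : ι → Derivation R A M) (a : A) :
    (∑ i ∈ s, Ds i) a = ∑ i ∈ s, Ds i a :=
  (congrFun (map_sum coeFnAddMonoidHom Ds s) a).trans (Finset.sum_apply _ _ _)

theorem leibniz_prod (D : Derivation R A M) {ι : Type*} [DecidableEq ι] (s : Finset ι)
    (f : ι → A) : D (∏ i ∈ s, f i) = ∑ i ∈ s, (∏ j ∈ s.erase i, f j) • D (f i) := by
  induction s using Finset.induction_on with
  | empty => simp
  | insert a s ha ih =>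
    rw [Finset.prod_insert ha, leibniz, ih, Finset.sum_insert ha, Finset.erase_insert ha,
      Finset.smul_sum, add_comm]
    congr 1
    refine Finset.sum_congr rfl fun i hi => ?_
    rw [Finset.erase_insert_of_ne (ne_of_mem_of_not_mem hi ha).symm,
      Finset.prod_insert (fun h => ha (Finset.mem_of_mem_erase h)), mul_smul]

end Derivation

theorem Derivation.apply_det {R A : Type*} [CommSemiring R] [CommRing A] [Algebra R A]
    (D : Derivation R A A) {n : Type*} [Fintype n] [DecidableEq n] (M : Matrix n n A) :
    D M.det = ∑ i, (M.updateRow i fun j => D (M i j)).det := by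
  simp only [Matrix.det_apply, map_sum, Units.smul_def, map_zsmul]
  rw [Finset.sum_comm]
  refine Finset.sum_congr rfl fun σ _ => ?_
  rw [D.leibniz_prod, Finset.smul_sum]
  refine Fintype.sum_equiv σ _ _ fun i => ?_
  rw [← Finset.prod_erase_mul _ _ (Finset.mem_univ i), Matrix.updateRow_self, smul_eq_mul]
  congr 2
  refine Finset.prod_congr rfl fun j hj => ?_
  rw [Matrix.updateRow_ne (σ.injective.ne (Finset.ne_of_mem_erase hj))]

theorem Function.Injective.range_update {α β : Type*} [DecidableEq α] {f : α → β}
    (hf : Function.Injective f) (a : α) (b : β) :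
    Set.range (Function.update f a b) = insert b (Set.range f \ {f a}) := by
  ext y
  simp only [Set.mem_range, Set.mem_insert_iff, Set.mem_sdiff, Set.mem_singleton_iff]
  constructor
  · rintro ⟨x, rfl⟩
    by_cases hx : x = a
    · left; rw [hx, Function.update_self]
    · right; rw [Function.update_of_ne hx]; exact ⟨⟨x, rfl⟩, hf.ne hx⟩
  · rintro (rfl | ⟨⟨x, rfl⟩, hx⟩)
    · exact ⟨a, Function.update_self a y f⟩
    · exact ⟨x, Function.update_of_ne (fun h => hx (congrArg f h)) _ _⟩

theorem Fin.val_cycleIcc {n : ℕ} (i j a : Fin n) :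
    (Fin.cycleIcc i j a : ℕ) =
      (if (a : ℕ) < i ∨ (j : ℕ) < a then (a : ℕ) else if (a : ℕ) = j then (i : ℕ)
        else (a : ℕ) + 1 : ℕ) := by
  have : NeZero n := NeZero.of_pos i.pos
  rcases lt_or_ge a i with hai | hia
  · simp [Fin.cycleIcc_of_lt hai, Fin.lt_def.1 hai]
  rcases lt_or_ge j a with hja | haj
  · simp [Fin.cycleIcc_of_gt hja, Fin.lt_def.1 hja]
  rw [Fin.cycleIcc_of_le_of_le hia haj, if_neg (show ¬((a : ℕ) < i ∨ (j : ℕ) < a) by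
    rw [not_or, not_lt, not_lt]; exact ⟨hia, haj⟩)]
  by_cases h : a = j
  · rw [if_pos h, if_pos (congrArg Fin.val h)]
  · rw [if_neg h, if_neg (Fin.val_ne_of_ne h)]
    have hlt : (a : ℕ) < j := Fin.lt_def.1 (lt_of_le_of_ne haj h)
    exact Fin.val_add_one_of_lt' (by have := j.isLt; omega)

/-- `update e i x ∘ cycleIcc i j` is `e` with its entry at `i` deleted and `x` inserted at `j`. -/
theorem StrictMono.update_comp_cycleIcc {α : Type*} [Preorder α] {n : ℕ} {e : Fin n → α}
    (he : StrictMono e) {i j : Fin n} (hij : i ≤ j) {x : α} (hlt : ∀ a ≤ j, a ≠ i → e a < x)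
    (hgt : ∀ a, j < a → x < e a) : StrictMono (Function.update e i x ∘ Fin.cycleIcc i j) := by
  have : NeZero n := NeZero.of_pos i.pos
  have hij' : (i : ℕ) ≤ j := hij
  have hne : ∀ a, a ≠ j → Fin.cycleIcc i j a ≠ i := fun a ha h => by
    have hva := Fin.val_cycleIcc i j a
    have : (a : ℕ) ≠ j := Fin.val_ne_of_ne ha
    rw [h] at hva
    split_ifs at hva <;> omega
  intro a b hab
  have hab' : (a : ℕ) < b := hab
  have hva := Fin.val_cycleIcc i j a
  have hvb := Fin.val_cycleIcc i j b
  simp only [Function.comp_apply]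
  by_cases ha : a = j
  · subst ha
    have hb : Fin.cycleIcc i a b = b := Fin.ext (by rw [hvb, if_pos (Or.inr hab')])
    rw [Fin.cycleIcc_of_last hij, Function.update_self, hb,
      Function.update_of_ne (ne_of_gt (lt_of_le_of_lt hij hab))]
    exact hgt b hab
  rw [Function.update_of_ne (hne a ha)]
  have ha' : (a : ℕ) ≠ j := Fin.val_ne_of_ne ha
  by_cases hb : b = j
  · subst hb
    rw [Fin.cycleIcc_of_last hij, Function.update_self]
    refine hlt _ (Fin.le_def.2 ?_) (hne a ha)
    split_ifs at hva <;> omega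
  have hb' : (b : ℕ) ≠ j := Fin.val_ne_of_ne hb
  rw [Function.update_of_ne (hne b hb)]
  refine he (Fin.lt_def.2 ?_)
  split_ifs at hva hvb <;> omega

theorem Monotone.apply_lt_iff_lt_card_filter {α : Type*} [Preorder α] [DecidableLT α] {n : ℕ}
    {e : Fin n → α} (he : Monotone e) (x : α) (a : Fin n) :
    e a < x ↔ (a : ℕ) < (Finset.univ.filter (e · < x)).card := by
  constructor
  · intro h
    have hsub : Finset.Iic a ⊆ Finset.univ.filter (e · < x) := fun b hb => by
      simpa using lt_of_le_of_lt (he (Finset.mem_Iic.1 hb)) h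
    simpa using Finset.card_le_card hsub
  · intro h
    by_contra hc
    have hsub : Finset.univ.filter (e · < x) ⊆ Finset.Iio a := fun b hb => by
      simp only [Finset.mem_filter, Finset.mem_univ, true_and] at hb
      exact Finset.mem_Iio.2 (lt_of_not_ge fun hab => hc (lt_of_le_of_lt (he hab) hb))
    have := Finset.card_le_card hsub
    rw [Fin.card_Iio] at this
    omega

noncomputable def zhelobenkoDerivation (N k l : ℕ) : Derivation ℂ Pz Pz :=
  pderiv (k, l) + ∑ j ∈ Finset.Icc (l + 1) N, zv l j • pderiv (k, j)

theorem zhelobenkoDerivation_apply (N k l : ℕ) (p : Pz) :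
    zhelobenkoDerivation N k l p = Rz N k l p := by
  simp [zhelobenkoDerivation, Rz, Derivation.finset_sum_apply]

theorem Rz_C (N k l : ℕ) (a : ℂ) : Rz N k l (C a) = 0 := by
  simp [Rz]

theorem pderiv_Zrow (i m k j : ℕ) :
    pderiv (k, j) (Zrow i m) = if i = k ∧ m = j ∧ i < m then 1 else 0 := by
  unfold Zrow zv
  split_ifs <;> simp_all [pderiv_X] <;> omega

theorem Rz_Zrow_of_ne {i k : ℕ} (h : i ≠ k) (N l m : ℕ) : Rz N k l (Zrow i m) = 0 := by
  simp [Rz, pderiv_Zrow, h]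

theorem Rz_Zrow_self {N k l m : ℕ} (hkl : k < l) (hm : m ≤ N) :
    Rz N k l (Zrow k m) = Zrow l m := by
  rcases lt_trichotomy m l with h | rfl | h
  all_goals simp only [Rz, pderiv_Zrow]
  · simp only [Zrow, h.ne, h.ne', h.not_gt, ↓reduceIte, true_and, false_and, and_false, mul_ite,
      mul_one, mul_zero, zero_add]
    exact Finset.sum_eq_zero fun x hx => if_neg (by simp only [Finset.mem_Icc] at hx; omega)
  · simp [Zrow, hkl]
  · simp [Zrow, h.ne, h.ne', h, hkl.trans h, hm]

section ZconstMat

variable {N s t : ℕ} (hst : s + t = N) (c : Fin t → Fin N → ℂ)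

theorem ZconstMat_apply_castLE (e : Fin s → ℕ) (a : Fin s) (j : Fin N) :
    ZconstMat N s t hst e c (Fin.castLE (by omega) a) j = Zrow (e a) (j + 1) := by
  simp [ZconstMat]

theorem ZconstMat_update (e : Fin s → ℕ) (a : Fin s) (x : ℕ) :
    ZconstMat N s t hst (Function.update e a x) c =
      (ZconstMat N s t hst e c).updateRow (Fin.castLE (by omega) a) fun j => Zrow x (j + 1) := by
  refine Matrix.ext fun i j => ?_
  simp only [ZconstMat, Matrix.updateRow_apply, Matrix.of_apply, Function.update_apply, Fin.ext_iff,
    Fin.val_castLE]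
  split_ifs <;> first | rfl | omega

theorem det_ZconstMat_comp_perm (e : Fin s → ℕ) (σ : Equiv.Perm (Fin s)) :
    (ZconstMat N s t hst (e ∘ σ) c).det = σ.sign * (ZconstMat N s t hst e c).det := by
  have hsN : s ≤ N := by omega
  rw [← σ.viaFintypeEmbedding_sign (Fin.castLEEmb hsN), ← Matrix.det_permute]
  congr 1
  refine Matrix.ext fun i j => ?_
  by_cases hi : (i : ℕ) < s
  · obtain ⟨a, rfl⟩ : ∃ a : Fin s, Fin.castLEEmb hsN a = i := ⟨⟨i, hi⟩, rfl⟩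
    rw [Matrix.submatrix_apply, Equiv.Perm.viaFintypeEmbedding_apply_image]
    simp only [Fin.castLEEmb_apply, ZconstMat_apply_castLE, Function.comp_apply, id]
  · rw [Matrix.submatrix_apply, Equiv.Perm.viaFintypeEmbedding_apply_notMem_range]
    · simp [ZconstMat, hi]
    · rintro ⟨a, rfl⟩
      exact hi a.isLt

theorem det_ZconstMat_eq_zero_of_apply_eq {e : Fin s → ℕ} {a b : Fin s} (hab : a ≠ b)
    (h : e a = e b) : (ZconstMat N s t hst e c).det = 0 :=
  Matrix.det_zero_of_row_eq (i := Fin.castLE (by omega) a) (j := Fin.castLE (by omega) b)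
    (by simpa [Fin.ext_iff] using hab) (funext fun j => by simp only [ZconstMat_apply_castLE, h])

theorem Rz_det_ZconstMat (e : Fin s → ℕ) {k l : ℕ} (hkl : k < l) :
    Rz N k l (ZconstMat N s t hst e c).det =
      ∑ a ∈ Finset.univ.filter (e · = k), (ZconstMat N s t hst (Function.update e a l) c).det := by
  have hsN : s ≤ N := by omega
  rw [← zhelobenkoDerivation_apply, Derivation.apply_det]
  simp only [zhelobenkoDerivation_apply]
  rw [← Finset.sum_subset (Finset.subset_univ (Finset.univ.map (Fin.castLEEmb hsN))),
    Finset.sum_map, Finset.sum_filter]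
  · refine Finset.sum_congr rfl fun a _ => ?_
    split_ifs with ha
    · rw [ZconstMat_update, Fin.castLEEmb_apply]
      congr 2
      funext j
      rw [ZconstMat_apply_castLE, ha, Rz_Zrow_self hkl (by omega)]
    · refine Matrix.det_eq_zero_of_row_eq_zero (Fin.castLEEmb hsN a) fun j => ?_
      rw [Matrix.updateRow_self, Fin.castLEEmb_apply, ZconstMat_apply_castLE, Rz_Zrow_of_ne ha]
  · intro i _ hi
    have hsi : ¬ (i : ℕ) < s := fun h => hi (Finset.mem_map.2 ⟨⟨i, h⟩, Finset.mem_univ _, rfl⟩)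
    refine Matrix.det_eq_zero_of_row_eq_zero i fun j => ?_
    simp [ZconstMat, hsi, Rz_C]

theorem det_ZconstMat_update_eq {e e' : Fin s → ℕ} (he : StrictMono e) (he' : StrictMono e')
    {a : Fin s} {l : ℕ} (hal : e a < l) (hl : ∀ b, e b ≠ l)
    (hrange : Set.range e' = insert l (Set.range e \ {e a})) :
    (ZconstMat N s t hst (Function.update e a l) c).det =
      (-1) ^ ((Finset.univ.filter (e · < l)).card - ((a : ℕ) + 1)) *
        (ZconstMat N s t hst e' c).det := by
  set m := (Finset.univ.filter (e · < l)).card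
  have hlt : ∀ b, e b < l ↔ (b : ℕ) < m := he.monotone.apply_lt_iff_lt_card_filter l
  have ham : (a : ℕ) < m := (hlt a).1 hal
  have hms : m ≤ s := (Finset.card_filter_le _ _).trans_eq (Finset.card_fin s)
  -- `l` belongs at the last position `p` whose entry of `e` is below `l`
  obtain ⟨p, hp⟩ : ∃ p : Fin s, (p : ℕ) = m - 1 := ⟨⟨m - 1, by omega⟩, rfl⟩
  have hap : a ≤ p := Fin.le_def.2 (by omega)
  have hsorted : e' = Function.update e a l ∘ Fin.cycleIcc a p := by
    refine (he'.range_inj (he.update_comp_cycleIcc hap (fun b hb _ => ?_) fun b hb => ?_)).1 ?_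
    · exact (hlt b).2 (by rw [Fin.le_def] at hb; omega)
    · refine lt_of_le_of_ne (not_lt.1 fun h => ?_) (hl b).symm
      have := (hlt b).1 h
      rw [Fin.lt_def] at hb
      omega
    · rw [hrange, EquivLike.range_comp, he.injective.range_update]
  rw [hsorted, det_ZconstMat_comp_perm, Fin.sign_cycleIcc_of_le hap,
    show (p : ℕ) - a = m - ((a : ℕ) + 1) by omega, ← mul_assoc]
  push_cast
  rw [← mul_pow, neg_one_mul, neg_neg, one_pow, one_mul]

end ZconstMat

theorem zhelobenko_on_determinant_general (N s t : ℕ) (hst : s + t = N)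
    (e : Fin s → ℕ) (he : StrictMono e)
    (c : Fin t → Fin N → ℂ) (k l : ℕ) (hkl : k < l) :
    ((∀ a, e a ≠ k) → Rz N k l (ZconstMat N s t hst e c).det = 0) ∧
    ((∃ a, e a = k) → (∃ a, e a = l) →
      Rz N k l (ZconstMat N s t hst e c).det = 0) ∧
    (∀ s₀ : Fin s, e s₀ = k → (∀ a, e a ≠ l) →
      ∀ e' : Fin s → ℕ, StrictMono e' →
        Set.range e' = insert l (Set.range e \ {k}) →
        Rz N k l (ZconstMat N s t hst e c).det =
          (-1 : Pz) ^ ((Finset.univ.filter (fun a : Fin s => e a < l)).card -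
              ((s₀ : ℕ) + 1)) *
            (ZconstMat N s t hst e' c).det) := by
  refine ⟨fun hk => ?_, fun _ ⟨b, hb⟩ => ?_, fun s₀ hs₀ hl e' he' hrange => ?_⟩
  all_goals rw [Rz_det_ZconstMat hst c e hkl]
  · rw [Finset.filter_false_of_mem fun a _ => hk a, Finset.sum_empty]
  · refine Finset.sum_eq_zero fun a ha => ?_
    have hab : a ≠ b := by
      rintro rfl
      simp only [Finset.mem_filter] at ha
      omega
    exact det_ZconstMat_eq_zero_of_apply_eq hst c hab
      (by rw [Function.update_self, Function.update_of_ne hab.symm, hb])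
  · have hk : Finset.univ.filter (e · = k) = {s₀} := by
      ext a
      simp [← hs₀, he.injective.eq_iff]
    rw [hk, Finset.sum_singleton]
    subst hs₀
    exact det_ZconstMat_update_eq hst c he he' hkl hl hrange

/-- action of the Zhelobenko operator `R_{kl}` on a determinant `Φ`
built from rows of the generic unipotent matrix `Z` indexed by `I = range e`
(with `e` strictly monotone) together with constant rows:
(a) `R_{kl} Φ = 0` if `k ∉ I`; (b) `R_{kl} Φ = 0` if `k ∈ I` and `l ∈ I`;
(c) if `k = e s₀ ∈ I` and `l ∉ I`, then `R_{kl} Φ = (−1)^{t−s} Φ'`, where `Φ'`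
is the analogous determinant built from the sorted index set
`I° = (I \ {k}) ∪ {l}`, `s` is the 1-based position of `k` in `I`, and `t` is
the number of elements of `I` that are `< l`. -/
theorem zhelobenko_on_determinant (N s t : ℕ) (hst : s + t = N)
    (e : Fin s → ℕ) (he : StrictMono e) (hbound : ∀ a, 1 ≤ e a ∧ e a ≤ N)
    (c : Fin t → Fin N → ℂ) (k l : ℕ) (hk : 1 ≤ k) (hkl : k < l) (hl : l ≤ N) :
    ((∀ a, e a ≠ k) → Rz N k l (ZconstMat N s t hst e c).det = 0) ∧
    ((∃ a, e a = k) → (∃ a, e a = l) →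
      Rz N k l (ZconstMat N s t hst e c).det = 0) ∧
    (∀ s₀ : Fin s, e s₀ = k → (∀ a, e a ≠ l) →
      ∀ e' : Fin s → ℕ, StrictMono e' →
        Set.range e' = insert l (Set.range e \ {k}) →
        Rz N k l (ZconstMat N s t hst e c).det =
          (-1 : Pz) ^ ((Finset.univ.filter (fun a : Fin s => e a < l)).card -
              ((s₀ : ℕ) + 1)) *
            (ZconstMat N s t hst e' c).det) :=
  zhelobenko_on_determinant_general N s t hst e he c k l hkl
end

section
/- The Jacobian cocycle identity: define c(Z, g) = ∏_{j=1}^{n−1} det([Zg]_{jj})^{−2} for Z upper unitriangular and g ∈ GL(n,ℂ) with all leading minors of Zg nonzero. Then c satisfies the chain identity c(Z, gh) = c(Z, g) · c(Z^{[g]}, h) whenever both sides are defined, where Z^{[g]} is the unipotent factor of the Gauss decomposition of Zg. -/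
/-- The Jacobian cocycle `c(Z, g) = ∏_{j=1}^{n−1} det([Zg]_{jj})^{−2}`. -/
noncomputable def jacCocycle (n : ℕ) (Z g : Matrix (Fin n) (Fin n) ℂ) : ℂ :=
  ∏ j ∈ Finset.Icc 1 (n - 1), cornerDet (Z * g) j ^ (-2 : ℤ)

/-!
Writing `Zg = b Z'` with `b` lower triangular and `Z'` unitriangular, every leading corner of
`b Z' h` is the product of the corresponding corners of `b` and `Z' h`, because a lower
triangular `b` only mixes rows within each corner. The corner minors of `b` are those of
`Zg` (the corners of `Z'` have determinant one), so every corner minor of `Zgh` factors as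
`det([Zg]_{jj}) · det([Z' h]_{jj})`, and the chain identity follows factor by factor.
-/

theorem Matrix.submatrix_castLE_mul_of_lower {R : Type*} [NonUnitalNonAssocSemiring R]
    {m n : ℕ} (h : m ≤ n) (b M : Matrix (Fin n) (Fin n) R) (hb : ∀ i j, i < j → b i j = 0) :
    (b * M).submatrix (Fin.castLE h) (Fin.castLE h) =
      b.submatrix (Fin.castLE h) (Fin.castLE h) * M.submatrix (Fin.castLE h) (Fin.castLE h) := by
  ext i j
  refine (Fintype.sum_of_injective _ (Fin.castLE_injective h) _ _ ?_ fun _ => rfl).symm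
  intro x hx
  have hix : Fin.castLE h i < x := by
    by_contra! hle
    exact hx ⟨⟨x, lt_of_le_of_lt hle i.isLt⟩, rfl⟩
  simp [hb _ _ hix]

theorem cornerDet_mul_of_lower {n : ℕ} (k : ℕ) (b M : Matrix (Fin n) (Fin n) ℂ)
    (hb : ∀ i j, i < j → b i j = 0) :
    cornerDet (b * M) k = cornerDet b k * cornerDet M k := by
  rw [cornerDet, Matrix.submatrix_castLE_mul_of_lower _ b M hb, Matrix.det_mul]
  rfl

theorem cornerDet_eq_one_of_unitriangular {n : ℕ} (k : ℕ) (U : Matrix (Fin n) (Fin n) ℂ)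
    (hU1 : ∀ i, U i i = 1) (hU0 : ∀ i j, j < i → U i j = 0) :
    cornerDet U k = 1 := by
  have hupper : (U.submatrix (Fin.castLE (min_le_right k n))
      (Fin.castLE (min_le_right k n))).IsUpperTriangular := fun i j hij => hU0 _ _ hij
  rw [cornerDet, Matrix.det_of_isUpperTriangular hupper]
  simp [hU1]

theorem cornerDet_mul_of_gauss {n : ℕ} (k : ℕ) (b U h : Matrix (Fin n) (Fin n) ℂ)
    (hb : ∀ i j, i < j → b i j = 0)
    (hU1 : ∀ i, U i i = 1) (hU0 : ∀ i j, j < i → U i j = 0) :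
    cornerDet (b * U * h) k = cornerDet (b * U) k * cornerDet (U * h) k := by
  rw [Matrix.mul_assoc, cornerDet_mul_of_lower k b _ hb, cornerDet_mul_of_lower k b U hb,
    cornerDet_eq_one_of_unitriangular k U hU1 hU0, mul_one]

theorem jacobian_cocycle_chain_general (n : ℕ) (Z Z' b g h : Matrix (Fin n) (Fin n) ℂ)
    (hb : ∀ i j, i < j → b i j = 0)
    (hZ'1 : ∀ i, Z' i i = 1) (hZ'0 : ∀ i j, j < i → Z' i j = 0)
    (hdec : Z * g = b * Z') :
    jacCocycle n Z (g * h) = jacCocycle n Z g * jacCocycle n Z' h := by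
  rw [jacCocycle, jacCocycle, jacCocycle, ← Finset.prod_mul_distrib]
  refine Finset.prod_congr rfl fun j _ => ?_
  rw [← Matrix.mul_assoc, hdec, cornerDet_mul_of_gauss j b Z' h hb hZ'1 hZ'0, mul_zpow]

/-- the chain identity `c(Z, gh) = c(Z, g) · c(Z^{[g]}, h)` for the
Jacobian cocycle `c(Z, g) = ∏_{j=1}^{n−1} det([Zg]_{jj})^{−2}`, whenever both
sides are defined (`Z` upper unitriangular, `Zg = b Z'` a Gauss decomposition
with `b` lower triangular invertible and `Z' = Z^{[g]}` upper unitriangular,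
and all leading principal minors of `Zg` and of `Zgh` nonzero). -/
theorem jacobian_cocycle_chain (n : ℕ) (Z Z' b g h : Matrix (Fin n) (Fin n) ℂ)
    (hZ1 : ∀ i, Z i i = 1) (hZ0 : ∀ i j, j < i → Z i j = 0)
    (hb : ∀ i j, i < j → b i j = 0) (hbu : IsUnit b.det)
    (hZ'1 : ∀ i, Z' i i = 1) (hZ'0 : ∀ i j, j < i → Z' i j = 0)
    (hdec : Z * g = b * Z')
    (hminors₁ : ∀ j, 1 ≤ j → j ≤ n → cornerDet (Z * g) j ≠ 0)
    (hminors₂ : ∀ j, 1 ≤ j → j ≤ n → cornerDet (Z * g * h) j ≠ 0) :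
    jacCocycle n Z (g * h) = jacCocycle n Z g * jacCocycle n Z' h :=
  jacobian_cocycle_chain_general n Z Z' b g h hb hZ'1 hZ'0 hdec
end
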